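/- Consistency lemma: let M = (f, p) be an incentive-compatible, individually rational, and nonbossy mechanism in a single-parameter environment, let o ≠ o' be two feasible outcomes in 𝒪, and let q, q' ∈ (ℝ≥0)ⁿ be vectors such that p(w) = q for every w with f(w) = o and p(w) = q' for every w with f(w) = o' (such vectors exist by the payment characterization). If v, v' ∈ (ℝ≥0)ⁿ satisfy min{vᵢ, vᵢ'} ≥ max{qᵢ, qᵢ'} for every agent i, then f(v) = o implies f(v') ≠ o'. -/

import Mathlib

/-!
Moving a single agent's bid without crossing the relevant threshold leaves the whole outcome
unchanged: a winner keeps winning at the same price as long as the bid stays above that price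
(IC), a loser keeps losing at price zero as long as the bid does not increase (IC and IR), and
nonbossiness turns "same allocation and payment for `i`" into "same outcome". Changing the bids
one agent at a time, both `v` and `v'` can be moved to the pointwise minimum `v ⊓ v'` without
changing their outcomes, so `f (v ⊓ v')` would be both `o` and `o'`.
-/

open Function NNReal

/-- Quasilinear utility of agent `i` with value `vi`, allocation `S` (agent `i`
receives an item iff `i ∈ S`) and payment `qi`. -/
noncomputable def utility {n : ℕ} (vi : ℝ≥0) (i : Fin n) (S : Finset (Fin n))
    (qi : ℝ≥0) : ℝ :=
  (if i ∈ S then (vi : ℝ) else 0) - (qi : ℝ)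

/-- Incentive-compatibility in a single-parameter environment, where ties are
broken in favor of receiving an item. -/
def SPIC {n : ℕ} (f : (Fin n → ℝ≥0) → Finset (Fin n))
    (p : (Fin n → ℝ≥0) → Fin n → ℝ≥0) : Prop :=
  ∀ (v : Fin n → ℝ≥0) (i : Fin n) (x : ℝ≥0),
    utility (v i) i (f v) (p v i) >
      utility (v i) i (f (update v i x)) (p (update v i x) i) ∨
    (utility (v i) i (f v) (p v i) =
      utility (v i) i (f (update v i x)) (p (update v i x) i) ∧
      (i ∈ f (update v i x) → i ∈ f v))

/-- Individual rationality. -/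
def SPIR {n : ℕ} (f : (Fin n → ℝ≥0) → Finset (Fin n))
    (p : (Fin n → ℝ≥0) → Fin n → ℝ≥0) : Prop :=
  ∀ (v : Fin n → ℝ≥0) (i : Fin n), 0 ≤ utility (v i) i (f v) (p v i)

/-- Nonbossiness: no agent can change the outcome or payments of others without
changing their own allocation or payment. -/
def SPNB {n : ℕ} (f : (Fin n → ℝ≥0) → Finset (Fin n))
    (p : (Fin n → ℝ≥0) → Fin n → ℝ≥0) : Prop :=
  ∀ (v : Fin n → ℝ≥0) (i : Fin n) (x : ℝ≥0),
    (i ∈ f v ↔ i ∈ f (update v i x)) → p v i = p (update v i x) i →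
    f v = f (update v i x) ∧ p v = p (update v i x)

section Utility

variable {n : ℕ} {i : Fin n} {S : Finset (Fin n)}

theorem utility_of_mem (vi qi : ℝ≥0) (h : i ∈ S) : utility vi i S qi = vi - qi := by
  simp [utility, h]

theorem utility_of_notMem (vi qi : ℝ≥0) (h : i ∉ S) : utility vi i S qi = -qi := by
  simp [utility, h]

end Utility

section Mechanism

variable {n : ℕ} {f : (Fin n → ℝ≥0) → Finset (Fin n)} {p : (Fin n → ℝ≥0) → Fin n → ℝ≥0}
  {w : Fin n → ℝ≥0} {i : Fin n} {x : ℝ≥0}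

theorem SPIR.payment_eq_zero (hIR : SPIR f p) (hi : i ∉ f w) : p w i = 0 := by
  have h := hIR w i
  rw [utility_of_notMem _ _ hi] at h
  exact NNReal.coe_eq_zero.mp (le_antisymm (by linarith) (p w i).coe_nonneg)

namespace SPIC

theorem utility_update_le (hIC : SPIC f p) (w : Fin n → ℝ≥0) (i : Fin n) (x : ℝ≥0) :
    utility (w i) i (f (update w i x)) (p (update w i x) i) ≤ utility (w i) i (f w) (p w i) := by
  rcases hIC w i x with h | ⟨h, -⟩
  exacts [h.le, h.ge]

theorem utility_update_lt (hIC : SPIC f p) (hi : i ∉ f w) (hi' : i ∈ f (update w i x)) :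
    utility (w i) i (f (update w i x)) (p (update w i x) i) < utility (w i) i (f w) (p w i) := by
  rcases hIC w i x with h | ⟨-, h⟩
  exacts [h, absurd (h hi') hi]

/-! The same two facts seen from the profile `update w i x`, deviating back to `w i`. -/

theorem utility_le_update (hIC : SPIC f p) (w : Fin n → ℝ≥0) (i : Fin n) (x : ℝ≥0) :
    utility x i (f w) (p w i) ≤ utility x i (f (update w i x)) (p (update w i x) i) := by
  simpa using hIC.utility_update_le (update w i x) i (w i)

theorem utility_lt_update (hIC : SPIC f p) (hi : i ∈ f w) (hi' : i ∉ f (update w i x)) :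
    utility x i (f w) (p w i) < utility x i (f (update w i x)) (p (update w i x) i) := by
  simpa using hIC.utility_update_lt (w := update w i x) (x := w i) hi' (by simpa using hi)

theorem payment_update_eq (hIC : SPIC f p) (hi : i ∈ f w) (hi' : i ∈ f (update w i x)) :
    p (update w i x) i = p w i := by
  have h₁ := hIC.utility_update_le w i x
  have h₂ := hIC.utility_le_update w i x
  rw [utility_of_mem _ _ hi, utility_of_mem _ _ hi'] at h₁ h₂
  exact NNReal.coe_injective (by linarith)

theorem mem_update_of_payment_le (hIC : SPIC f p) (hi : i ∈ f w) (hx : p w i ≤ x) :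
    i ∈ f (update w i x) := by
  by_contra hi'
  have h := hIC.utility_lt_update hi hi'
  rw [utility_of_mem _ _ hi, utility_of_notMem _ _ hi'] at h
  have hx' : (p w i : ℝ) ≤ x := hx
  linarith [(p (update w i x) i).coe_nonneg]

theorem notMem_update_of_le (hIC : SPIC f p) (hIR : SPIR f p) (hi : i ∉ f w) (hx : x ≤ w i) :
    i ∉ f (update w i x) := by
  intro hi'
  have h₁ := hIC.utility_update_lt hi hi'
  have h₂ := hIC.utility_le_update w i x
  rw [utility_of_notMem _ _ hi, utility_of_mem _ _ hi', hIR.payment_eq_zero hi] at h₁ h₂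
  have hx' : (x : ℝ) ≤ w i := hx
  linarith

end SPIC

theorem update_eq_of_mem_of_payment_le (hIC : SPIC f p) (hNB : SPNB f p) (hi : i ∈ f w)
    (hx : p w i ≤ x) : f (update w i x) = f w :=
  have hi' := hIC.mem_update_of_payment_le hi hx
  (hNB w i x (iff_of_true hi hi') (hIC.payment_update_eq hi hi').symm).1.symm

theorem update_eq_of_notMem_of_le (hIC : SPIC f p) (hIR : SPIR f p) (hNB : SPNB f p)
    (hi : i ∉ f w) (hx : x ≤ w i) : f (update w i x) = f w :=
  have hi' := hIC.notMem_update_of_le hIR hi hx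
  (hNB w i x (iff_of_false hi hi')
    (by rw [hIR.payment_eq_zero hi, hIR.payment_eq_zero hi'])).1.symm

theorem outcome_eq_of_payment_le_on_of_le_off (hIC : SPIC f p) (hIR : SPIR f p)
    (hNB : SPNB f p) {o : Finset (Fin n)} {q u : Fin n → ℝ≥0} (hq : ∀ w, f w = o → p w = q)
    (hw : f w = o) (hwin : ∀ i ∈ o, q i ≤ u i) (hlose : ∀ i ∉ o, u i ≤ w i) : f u = o := by
  suffices h : ∀ s : Finset (Fin n), f (s.piecewise u w) = o by
    simpa using h Finset.univ
  intro s
  induction s using Finset.induction_on with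
  | empty => simpa using hw
  | insert a s ha ih =>
    rw [Finset.piecewise_insert]
    by_cases hao : a ∈ o
    · rw [update_eq_of_mem_of_payment_le hIC hNB (ih ▸ hao) (by rw [hq _ ih]; exact hwin a hao),
        ih]
    · rw [update_eq_of_notMem_of_le hIC hIR hNB (ih ▸ hao) (by simpa [ha] using hlose a hao), ih]

end Mechanism

theorem consistency_lemma_general (n : ℕ)
    (f : (Fin n → ℝ≥0) → Finset (Fin n)) (p : (Fin n → ℝ≥0) → Fin n → ℝ≥0)
    (hIC : SPIC f p) (hIR : SPIR f p) (hNB : SPNB f p)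
    (o o' : Finset (Fin n)) (hne : o ≠ o')
    (q q' : Fin n → ℝ≥0)
    (hq : ∀ w, f w = o → p w = q) (hq' : ∀ w, f w = o' → p w = q')
    (v v' : Fin n → ℝ≥0)
    (hvv' : ∀ i, max (q i) (q' i) ≤ min (v i) (v' i)) :
    f v = o → f v' ≠ o' := by
  intro hv hv'
  have hmin_o : f (v ⊓ v') = o :=
    outcome_eq_of_payment_le_on_of_le_off hIC hIR hNB hq hv
      (fun i _ => (le_max_left _ _).trans (hvv' i)) (fun _ _ => inf_le_left)
  have hmin_o' : f (v ⊓ v') = o' :=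
    outcome_eq_of_payment_le_on_of_le_off hIC hIR hNB hq' hv'
      (fun i _ => (le_max_right _ _).trans (hvv' i)) (fun _ _ => inf_le_right)
  exact hne (hmin_o.symm.trans hmin_o')

/-- Consistency lemma: if both `v` and `v'` satisfy both outcomes `o` and `o'`
(their values are above both associated payment vectors), then `f v = o`
implies `f v' ≠ o'`. -/
theorem consistency_lemma (n : ℕ) (Feas : Finset (Finset (Fin n)))
    (f : (Fin n → ℝ≥0) → Finset (Fin n)) (p : (Fin n → ℝ≥0) → Fin n → ℝ≥0)
    (hfeas : ∀ v, f v ∈ Feas)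
    (hIC : SPIC f p) (hIR : SPIR f p) (hNB : SPNB f p)
    (o o' : Finset (Fin n)) (ho : o ∈ Feas) (ho' : o' ∈ Feas) (hne : o ≠ o')
    (q q' : Fin n → ℝ≥0)
    (hq : ∀ w, f w = o → p w = q) (hq' : ∀ w, f w = o' → p w = q')
    (v v' : Fin n → ℝ≥0)
    (hvv' : ∀ i, max (q i) (q' i) ≤ min (v i) (v' i)) :
    f v = o → f v' ≠ o' :=
  consistency_lemma_general n f p hIC hIR hNB o o' hne q q' hq hq' v v' hvv'
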